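/- arXiv:2012.05942 — 7 statements merged into one kernel-verified Lean document; each statement's English description precedes it below -/
import Mathlib

section
/- Let μ and ν be Borel probability measures on ℝ^d with finite second moments, with μ absolutely continuous with respect to the Lebesgue measure. Let G : ℝ^d → ℝ be a convex function, differentiable μ-almost everywhere, such that (∇G)_* μ = ν. Let F_n : ℝ^d → ℝ be differentiable convex functions that converge pointwise on ℝ^d (to some real-valued function) and such that the pushforwards (∇F_n)_* μ converge weakly to ν. Then ∇F_n(x) → ∇G(x) for μ-almost every x ∈ ℝ^d. -/
open MeasureTheory Filter Topology Set
open scoped RealInnerProductSpace ENNReal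

/-!
The pointwise limit `f` of the `Fₙ` is convex, hence locally Lipschitz and, by Rademacher's
theorem, differentiable Lebesgue-a.e., so `μ`-a.e. At such a point `x` the gradients `∇Fₙ x` are
subgradients of `Fₙ`; they are bounded since `⟪∇Fₙ x, v⟫ ≤ Fₙ (x + v) - Fₙ x` and the right side
converges, and each of their cluster points is a subgradient of `f` at `x`, hence equals `∇f x`.
So `∇Fₙ → ∇f` `μ`-a.e., and `(∇f)_* μ = ν` is the weak limit of `(∇Fₙ)_* μ`.

It remains to see that two convex potentials `Φ, Ψ` with `(∇Φ)_* μ = (∇Ψ)_* μ` have `μ`-a.e.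
equal gradients. Integrating the Fenchel–Young inequality `⟪x, y⟫ ≤ Φ x + Φ* y`, which is an
equality exactly when `y` is a subgradient of `Φ` at `x`, gives
`∫ ⟪x, ∇Ψ x⟫ dμ ≤ ∫ Φ dμ + ∫ Φ* dν = ∫ ⟪x, ∇Φ x⟫ dμ`. The same holds with `Φ` and `Ψ`
swapped, so equality holds, and `∇Ψ x` is a subgradient of `Φ` at `x` for `μ`-a.e. `x`.
-/

section Subgradient

variable {E : Type*} [NormedAddCommGroup E] [InnerProductSpace ℝ E]

def IsSubgradient (f : E → ℝ) (x p : E) : Prop :=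
  ∀ y, f x + ⟪p, y - x⟫ ≤ f y

theorem IsSubgradient.of_tendsto {ι : Type*} {l : Filter ι} [l.NeBot] {F : ι → E → ℝ}
    {f : E → ℝ} {x : E} {p : ι → E} {q : E} (hF : ∀ y, Tendsto (fun i => F i y) l (𝓝 (f y)))
    (hp : Tendsto p l (𝓝 q)) (hsub : ∀ i, IsSubgradient (F i) x (p i)) :
    IsSubgradient f x q := fun y =>
  le_of_tendsto_of_tendsto' ((hF x).add (hp.inner tendsto_const_nhds)) (hF y) fun i => hsub i y

variable [CompleteSpace E] {f : E → ℝ} {g x : E}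

theorem HasGradientAt.tendsto_slope_inner (hf : HasGradientAt f g x) (v : E) :
    Tendsto (fun t : ℝ => t⁻¹ * (f (x + t • v) - f x)) (𝓝[>] 0) (𝓝 ⟪g, v⟫) := by
  simpa using (hf.hasFDerivAt.hasLineDerivAt v).tendsto_slope_zero_right

theorem ConvexOn.isSubgradient_of_hasGradientAt (hconv : ConvexOn ℝ univ f)
    (hf : HasGradientAt f g x) : IsSubgradient f x g := by
  intro y
  suffices ⟪g, y - x⟫ ≤ f y - f x by linarith
  refine le_of_tendsto (hf.tendsto_slope_inner (y - x)) ?_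
  filter_upwards [Ioc_mem_nhdsGT_of_mem (left_mem_Ico.mpr one_pos)] with t ⟨ht0, ht1⟩
  have hconvt := hconv.2 (mem_univ x) (mem_univ y) (sub_nonneg.mpr ht1) ht0.le (by ring)
  have hpt : (1 - t) • x + t • y = x + t • (y - x) := by module
  rw [hpt, smul_eq_mul, smul_eq_mul] at hconvt
  rw [inv_mul_le_iff₀ ht0]
  linarith

theorem HasGradientAt.eq_of_isSubgradient {p : E} (hf : HasGradientAt f g x)
    (hp : IsSubgradient f x p) : p = g := by
  have hle : ∀ v, ⟪p, v⟫ ≤ ⟪g, v⟫ := fun v => by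
    refine ge_of_tendsto (hf.tendsto_slope_inner v) ?_
    filter_upwards [self_mem_nhdsWithin] with t (ht : 0 < t)
    have := hp (x + t • v)
    rw [add_sub_cancel_left, real_inner_smul_right] at this
    rw [le_inv_mul_iff₀ ht]
    linarith
  have hnorm : ‖p - g‖ ^ 2 ≤ 0 := by
    rw [← real_inner_self_eq_norm_sq, inner_sub_left]
    linarith [hle (p - g)]
  rw [← sub_eq_zero, ← norm_eq_zero]
  exact pow_eq_zero_iff two_ne_zero |>.mp (le_antisymm hnorm (sq_nonneg _))

end Subgradient

theorem ConvexOn.of_tendsto {E : Type*} [AddCommMonoid E] [Module ℝ E] {s : Set E} {ι : Type*}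
    {l : Filter ι} [l.NeBot] {F : ι → E → ℝ} {f : E → ℝ} (hF : ∀ i, ConvexOn ℝ s (F i))
    (hs : Convex ℝ s) (hlim : ∀ x, Tendsto (fun i => F i x) l (𝓝 (f x))) : ConvexOn ℝ s f :=
  ⟨hs, fun x hx y hy a b ha hb hab =>
    le_of_tendsto_of_tendsto' (hlim _) (((hlim x).const_mul a).add ((hlim y).const_mul b))
      fun i => (hF i).2 hx hy ha hb hab⟩

section FiniteDimensional

variable {E : Type*} [NormedAddCommGroup E] [InnerProductSpace ℝ E] [FiniteDimensional ℝ E]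

theorem isBounded_of_forall_bddAbove_inner {s : Set E}
    (h : ∀ v, BddAbove ((fun p => ⟪p, v⟫) '' s)) : Bornology.IsBounded s := by
  let b := stdOrthonormalBasis ℝ E
  have habs : ∀ i, ∃ C, ∀ p ∈ s, |⟪b i, p⟫| ≤ C := fun i => by
    obtain ⟨Cp, hCp⟩ := h (b i)
    obtain ⟨Cm, hCm⟩ := h (-b i)
    refine ⟨max Cp Cm, fun p hp => abs_le.mpr ⟨?_, ?_⟩⟩
    · have := hCm (mem_image_of_mem _ hp)
      simp only [inner_neg_right] at this
      linarith [le_max_right Cp Cm, real_inner_comm p (b i)]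
    · have := hCp (mem_image_of_mem _ hp)
      linarith [le_max_left Cp Cm, real_inner_comm p (b i)]
  choose C hC using habs
  refine (Metric.isBounded_iff_subset_closedBall 0).mpr ⟨∑ i, C i, fun p hp => ?_⟩
  rw [mem_closedBall_zero_iff]
  calc ‖p‖ = ‖∑ i, ⟪b i, p⟫ • b i‖ := by rw [b.sum_repr']
    _ ≤ ∑ i, ‖⟪b i, p⟫ • b i‖ := norm_sum_le _ _
    _ ≤ ∑ i, C i := Finset.sum_le_sum fun i _ => by
      rw [norm_smul, b.orthonormal.1 i, mul_one, Real.norm_eq_abs]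
      exact hC i p hp

variable [CompleteSpace E]

theorem tendsto_gradient_of_convexOn {F : ℕ → E → ℝ} {f : E → ℝ} {x : E}
    (hFconv : ∀ n, ConvexOn ℝ univ (F n)) (hFdiff : ∀ n, DifferentiableAt ℝ (F n) x)
    (hlim : ∀ y, Tendsto (fun n => F n y) atTop (𝓝 (f y))) (hf : DifferentiableAt ℝ f x) :
    Tendsto (fun n => gradient (F n) x) atTop (𝓝 (gradient f x)) := by
  have hsub : ∀ n, IsSubgradient (F n) x (gradient (F n) x) := fun n =>
    (hFconv n).isSubgradient_of_hasGradientAt (hFdiff n).hasGradientAt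
  have hbdd : Bornology.IsBounded (range fun n => gradient (F n) x) := by
    refine isBounded_of_forall_bddAbove_inner fun v => ?_
    obtain ⟨C, hC⟩ := ((hlim (x + v)).sub (hlim x)).bddAbove_range
    refine ⟨C, forall_mem_image.mpr <| forall_mem_range.mpr fun n => ?_⟩
    have := hsub n (x + v)
    rw [add_sub_cancel_left] at this
    linarith [hC (mem_range_self n)]
  refine tendsto_of_subseq_tendsto fun ns hns => ?_
  obtain ⟨q, -, φ, hφ, hq⟩ := tendsto_subseq_of_bounded hbdd fun k => mem_range_self (ns k)
  have hnsφ := hns.comp hφ.tendsto_atTop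
  have hq_sub : IsSubgradient f x q :=
    IsSubgradient.of_tendsto (fun y => (hlim y).comp hnsφ) hq fun k => hsub _
  exact ⟨φ, hf.hasGradientAt.eq_of_isSubgradient hq_sub ▸ hq⟩

end FiniteDimensional

theorem LocallyLipschitz.ae_differentiableAt {E F : Type*} [NormedAddCommGroup E]
    [NormedSpace ℝ E] [FiniteDimensional ℝ E] [MeasurableSpace E] [BorelSpace E]
    [NormedAddCommGroup F] [NormedSpace ℝ F] [FiniteDimensional ℝ F]
    {μ : Measure E} [μ.IsAddHaarMeasure] {f : E → F} (hf : LocallyLipschitz f) :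
    ∀ᵐ x ∂μ, DifferentiableAt ℝ f x := by
  choose K t ht hK using hf
  obtain ⟨s, hs, hcover⟩ := TopologicalSpace.countable_cover_nhds fun x =>
    interior_mem_nhds.mpr (ht x)
  have hloc : ∀ z ∈ s, ∀ᵐ x ∂μ, x ∈ interior (t z) → DifferentiableAt ℝ f x := fun z _ => by
    filter_upwards [((hK z).mono interior_subset).ae_differentiableWithinAt_of_mem] with x hx hxz
    exact (hx hxz).differentiableAt (isOpen_interior.mem_nhds hxz)
  filter_upwards [(ae_ball_iff hs).mpr hloc] with x hx
  obtain ⟨z, hz, hxz⟩ := mem_iUnion₂.mp (hcover ▸ mem_univ x)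
  exact hx z hz hxz

theorem measurable_gradient {E : Type*} [NormedAddCommGroup E] [InnerProductSpace ℝ E]
    [CompleteSpace E] [MeasurableSpace E] [BorelSpace E] (f : E → ℝ) :
    Measurable (gradient f) :=
  (InnerProductSpace.toDual ℝ E).symm.continuous.measurable.comp (measurable_fderiv ℝ f)

theorem map_eq_of_ae_tendsto_of_tendsto_integral {Ω Y : Type*} [MeasurableSpace Ω]
    [TopologicalSpace Y] [MeasurableSpace Y] [BorelSpace Y] [HasOuterApproxClosed Y]
    {μ : Measure Ω} [IsProbabilityMeasure μ] {ν : Measure Y} [IsProbabilityMeasure ν]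
    {T : ℕ → Ω → Y} {T' : Ω → Y} (hT : ∀ n, AEMeasurable (T n) μ) (hT' : AEMeasurable T' μ)
    (hae : ∀ᵐ ω ∂μ, Tendsto (fun n => T n ω) atTop (𝓝 (T' ω)))
    (hweak : ∀ g : BoundedContinuousFunction Y ℝ,
      Tendsto (fun n => ∫ x, g x ∂(μ.map (T n))) atTop (𝓝 (∫ x, g x ∂ν))) :
    μ.map T' = ν := by
  have hν : Tendsto (β := ProbabilityMeasure Y)
      (fun n => ⟨μ.map (T n), Measure.isProbabilityMeasure_map (hT n)⟩) atTop
      (𝓝 ⟨ν, inferInstance⟩) :=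
    ProbabilityMeasure.tendsto_iff_forall_integral_tendsto.mpr hweak
  have hT'lim := (tendstoInDistribution_of_ae_tendsto hT hT' hae).tendsto
  exact congrArg Subtype.val (tendsto_nhds_unique (X := ProbabilityMeasure Y) hT'lim hν)

theorem memLp_of_map_eq {Ω F : Type*} [MeasurableSpace Ω] [NormedAddCommGroup F]
    [MeasurableSpace F] [OpensMeasurableSpace F] [SecondCountableTopology F] {p : ℝ≥0∞}
    {μ : Measure Ω} {ν : Measure F} {T : Ω → F} (hT : AEMeasurable T μ) (hmap : μ.map T = ν)
    (hν : MemLp id p ν) : MemLp T p μ := by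
  subst hmap
  exact (memLp_map_measure_iff aestronglyMeasurable_id hT).mp hν

section Transport

variable {E : Type*} [NormedAddCommGroup E] [InnerProductSpace ℝ E]

theorem integrable_inner_of_memLp_two {Ω : Type*} [MeasurableSpace Ω] {μ : Measure Ω}
    {T S : Ω → E} (hT : MemLp T 2 μ) (hS : MemLp S 2 μ) :
    Integrable (fun ω => ⟪T ω, S ω⟫) μ :=
  (hT.norm.integrable_mul hS.norm).mono' (hT.1.inner hS.1) <| ae_of_all _ fun ω => by
    simpa using abs_real_inner_le_norm (T ω) (S ω)

theorem ConvexOn.integrable_of_memLp_gradient [FiniteDimensional ℝ E] [MeasurableSpace E]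
    [OpensMeasurableSpace E] {μ : Measure E} [IsFiniteMeasure μ] [NeZero μ] {Φ : E → ℝ}
    (hconv : ConvexOn ℝ univ Φ) (hdiff : ∀ᵐ x ∂μ, DifferentiableAt ℝ Φ x)
    (hid : MemLp id 2 μ) (hgrad : MemLp (gradient Φ) 2 μ) : Integrable Φ μ := by
  obtain ⟨x₀, hx₀⟩ := hdiff.exists
  have hsub : ∀ x, DifferentiableAt ℝ Φ x → IsSubgradient Φ x (gradient Φ x) := fun x hx =>
    hconv.isSubgradient_of_hasGradientAt hx.hasGradientAt
  have hid₀ : MemLp (fun x => x - x₀) 2 μ := hid.sub (memLp_const x₀)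
  refine integrable_of_le_of_le hconv.locallyLipschitz.continuous.aestronglyMeasurable
    (g₁ := fun x => Φ x₀ + ⟪gradient Φ x₀, x - x₀⟫) (g₂ := fun x => Φ x₀ + ⟪gradient Φ x, x - x₀⟫)
    (ae_of_all _ fun x => hsub x₀ hx₀ x) ?_
    ((integrable_const _).add (integrable_inner_of_memLp_two (memLp_const _) hid₀))
    ((integrable_const _).add (integrable_inner_of_memLp_two hgrad hid₀))
  filter_upwards [hdiff] with x hx
  have := hsub x hx x₀
  rw [← neg_sub x x₀, inner_neg_right] at this
  linarith

/-- The Fenchel conjugate `Φ*` shifted by `Φ 0`, which makes it nonnegative (take `z = 0`), so that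
it can be formed in `ℝ≥0∞`, where it may take the value `∞`. -/
noncomputable def shiftedConjugate (Φ : E → ℝ) (y : E) : ℝ≥0∞ :=
  ⨆ z, ENNReal.ofReal (⟪z, y⟫ - (Φ z - Φ 0))

theorem ofReal_le_shiftedConjugate (Φ : E → ℝ) (z y : E) :
    ENNReal.ofReal (⟪z, y⟫ - (Φ z - Φ 0)) ≤ shiftedConjugate Φ y :=
  le_iSup (fun z => ENNReal.ofReal (⟪z, y⟫ - (Φ z - Φ 0))) z

theorem IsSubgradient.shiftedConjugate_eq {Φ : E → ℝ} {x y : E} (h : IsSubgradient Φ x y) :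
    shiftedConjugate Φ y = ENNReal.ofReal (⟪x, y⟫ - (Φ x - Φ 0)) := by
  refine le_antisymm (iSup_le fun z => ENNReal.ofReal_le_ofReal ?_)
    (ofReal_le_shiftedConjugate Φ x y)
  have := h z
  rw [inner_sub_right] at this
  linarith [real_inner_comm z y, real_inner_comm x y]

theorem IsSubgradient.inner_sub_nonneg {Φ : E → ℝ} {x y : E} (h : IsSubgradient Φ x y) :
    0 ≤ ⟪x, y⟫ - (Φ x - Φ 0) := by
  have := h 0
  rw [zero_sub, inner_neg_right, real_inner_comm] at this
  linarith

theorem measurable_shiftedConjugate [MeasurableSpace E] [OpensMeasurableSpace E] (Φ : E → ℝ) :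
    Measurable (shiftedConjugate Φ) :=
  (lowerSemicontinuous_iSup fun _ =>
    (ENNReal.continuous_ofReal.comp (by fun_prop)).lowerSemicontinuous).measurable

theorem lintegral_shiftedConjugate_comp_eq [MeasurableSpace E] [OpensMeasurableSpace E]
    {μ : Measure E} {Φ : E → ℝ} {T S : E → E} (hT : ∀ᵐ x ∂μ, IsSubgradient Φ x (T x))
    (hTm : AEMeasurable T μ) (hSm : AEMeasurable S μ) (hmap : μ.map T = μ.map S)
    (hint : Integrable (fun x => ⟪x, T x⟫ - (Φ x - Φ 0)) μ) :
    ∫⁻ x, shiftedConjugate Φ (S x) ∂μ = ENNReal.ofReal (∫ x, ⟪x, T x⟫ - (Φ x - Φ 0) ∂μ) := by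
  have hψ := (measurable_shiftedConjugate Φ).aemeasurable (μ := μ.map T)
  rw [← lintegral_map' (hmap ▸ hψ) hSm, ← hmap, lintegral_map' hψ hTm,
    ofReal_integral_eq_lintegral_ofReal hint]
  · exact lintegral_congr_ae (by filter_upwards [hT] with x hx using hx.shiftedConjugate_eq)
  · filter_upwards [hT] with x hx using hx.inner_sub_nonneg

theorem integral_inner_le_of_isSubgradient [MeasurableSpace E] [OpensMeasurableSpace E]
    {μ : Measure E} [IsFiniteMeasure μ] {Φ : E → ℝ} {T S : E → E} (hΦ : Integrable Φ μ)
    (hT : ∀ᵐ x ∂μ, IsSubgradient Φ x (T x)) (hTm : AEMeasurable T μ) (hSm : AEMeasurable S μ)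
    (hmap : μ.map T = μ.map S) (hTint : Integrable (fun x => ⟪x, T x⟫) μ)
    (hSint : Integrable (fun x => ⟪x, S x⟫) μ) :
    ∫ x, ⟪x, S x⟫ ∂μ ≤ ∫ x, ⟪x, T x⟫ ∂μ ∧
      (∫ x, ⟪x, T x⟫ ∂μ ≤ ∫ x, ⟪x, S x⟫ ∂μ → ∀ᵐ x ∂μ, IsSubgradient Φ x (S x)) := by
  have hΦ' : Integrable (fun x => Φ x - Φ 0) μ := hΦ.sub (integrable_const _)
  have hlint := lintegral_shiftedConjugate_comp_eq hT hTm hSm hmap (hTint.sub hΦ')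
  set r : (E → E) → E → ℝ := fun U x => ⟪x, U x⟫ - (Φ x - Φ 0)
  have hrS : Integrable (r S) μ := hSint.sub hΦ'
  have hrT_eq : ∫ x, r T x ∂μ = ∫ x, ⟪x, T x⟫ ∂μ - ∫ x, Φ x - Φ 0 ∂μ := integral_sub hTint hΦ'
  have hrS_eq : ∫ x, r S x ∂μ = ∫ x, ⟪x, S x⟫ ∂μ - ∫ x, Φ x - Φ 0 ∂μ := integral_sub hSint hΦ'
  have hψS : AEMeasurable (fun x => shiftedConjugate Φ (S x)) μ :=
    (measurable_shiftedConjugate Φ).comp_aemeasurable hSm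
  have hfin : ∫⁻ x, shiftedConjugate Φ (S x) ∂μ ≠ ∞ := hlint ▸ ENNReal.ofReal_ne_top
  set H : E → ℝ := fun x => (shiftedConjugate Φ (S x)).toReal
  have hH : Integrable H μ := integrable_toReal_of_lintegral_ne_top hψS hfin
  have hH_eq : ∫ x, H x ∂μ = ∫ x, r T x ∂μ := by
    rw [integral_toReal hψS (ae_lt_top' hψS hfin), hlint, ENNReal.toReal_ofReal]
    exact integral_nonneg_of_ae (by filter_upwards [hT] with x hx using hx.inner_sub_nonneg)
  have hyoung : ∀ᵐ x ∂μ, ∀ z, ⟪z, S x⟫ - (Φ z - Φ 0) ≤ H x := by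
    filter_upwards [ae_lt_top' hψS hfin] with x hx z
    exact (ENNReal.ofReal_le_iff_le_toReal hx.ne).mp (ofReal_le_shiftedConjugate Φ z (S x))
  have hrSH : r S ≤ᵐ[μ] H := by filter_upwards [hyoung] with x hx using hx x
  have hle : ∫ x, r S x ∂μ ≤ ∫ x, H x ∂μ := integral_mono_ae hrS hH hrSH
  refine ⟨by linarith, fun hge => ?_⟩
  have hrSH_eq : r S =ᵐ[μ] H := (integral_eq_iff_of_ae_le hrS hH hrSH).mp (by linarith)
  filter_upwards [hyoung, hrSH_eq] with x hx hxeq z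
  have hzx : ⟪z, S x⟫ - (Φ z - Φ 0) ≤ ⟪x, S x⟫ - (Φ x - Φ 0) := (hx z).trans_eq hxeq.symm
  rw [inner_sub_right]
  linarith [real_inner_comm z (S x), real_inner_comm x (S x)]

theorem gradient_ae_eq_of_map_gradient_eq [FiniteDimensional ℝ E] [MeasurableSpace E]
    [BorelSpace E] {μ : Measure E} [IsFiniteMeasure μ] [NeZero μ] {Φ Ψ : E → ℝ}
    (hΦ : ConvexOn ℝ univ Φ) (hΨ : ConvexOn ℝ univ Ψ) (hΦd : ∀ᵐ x ∂μ, DifferentiableAt ℝ Φ x)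
    (hΨd : ∀ᵐ x ∂μ, DifferentiableAt ℝ Ψ x) (hid : MemLp id 2 μ)
    (hΦ2 : MemLp (gradient Φ) 2 μ) (hmap : μ.map (gradient Φ) = μ.map (gradient Ψ)) :
    gradient Φ =ᵐ[μ] gradient Ψ := by
  have hΦm := (measurable_gradient Φ).aemeasurable (μ := μ)
  have hΨm := (measurable_gradient Ψ).aemeasurable (μ := μ)
  have hΨ2 : MemLp (gradient Ψ) 2 μ :=
    memLp_of_map_eq hΨm hmap.symm ((memLp_map_measure_iff aestronglyMeasurable_id hΦm).mpr hΦ2)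
  have hsub : ∀ {Θ : E → ℝ}, ConvexOn ℝ univ Θ → (∀ᵐ x ∂μ, DifferentiableAt ℝ Θ x) →
      ∀ᵐ x ∂μ, IsSubgradient Θ x (gradient Θ x) := fun hΘ hΘd => by
    filter_upwards [hΘd] with x hx using hΘ.isSubgradient_of_hasGradientAt hx.hasGradientAt
  have hΦΨ := integral_inner_le_of_isSubgradient (hΦ.integrable_of_memLp_gradient hΦd hid hΦ2)
    (hsub hΦ hΦd) hΦm hΨm hmap (integrable_inner_of_memLp_two hid hΦ2)
    (integrable_inner_of_memLp_two hid hΨ2)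
  have hΨΦ := integral_inner_le_of_isSubgradient (hΨ.integrable_of_memLp_gradient hΨd hid hΨ2)
    (hsub hΨ hΨd) hΨm hΦm hmap.symm (integrable_inner_of_memLp_two hid hΨ2)
    (integrable_inner_of_memLp_two hid hΦ2)
  filter_upwards [hΦΨ.2 hΨΦ.1, hΦd] with x hx hd
  exact (hd.hasGradientAt.eq_of_isSubgradient hx).symm

end Transport

/-- Optimality: if `G` is a convex potential transporting `μ` to `ν`, and `Fₙ` are differentiable
convex potentials converging pointwise whose gradient pushforwards converge weakly to `ν`,
then `∇Fₙ → ∇G` μ-almost everywhere. -/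
theorem gradient_tendsto_brenier_of_weak_convergence
    (d : ℕ) (μ ν : Measure (EuclideanSpace ℝ (Fin d)))
    [IsProbabilityMeasure μ] [IsProbabilityMeasure ν]
    (hμ2 : Integrable (fun x => ‖x‖ ^ 2) μ) (hν2 : Integrable (fun y => ‖y‖ ^ 2) ν)
    (hac : μ ≪ volume)
    (G : EuclideanSpace ℝ (Fin d) → ℝ) (hGconv : ConvexOn ℝ univ G)
    (hGdiff : ∀ᵐ x ∂μ, DifferentiableAt ℝ G x)
    (hGpush : μ.map (fun x => gradient G x) = ν)
    (F : ℕ → EuclideanSpace ℝ (Fin d) → ℝ)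
    (hFdiff : ∀ n, Differentiable ℝ (F n))
    (hFconv : ∀ n, ConvexOn ℝ univ (F n))
    (hptwise : ∀ x, ∃ l : ℝ, Tendsto (fun n => F n x) atTop (𝓝 l))
    (hweak : ∀ g : BoundedContinuousFunction (EuclideanSpace ℝ (Fin d)) ℝ,
      Tendsto (fun n => ∫ x, g x ∂(μ.map (fun x => gradient (F n) x)))
        atTop (𝓝 (∫ y, g y ∂ν))) :
    ∀ᵐ x ∂μ, Tendsto (fun n => gradient (F n) x) atTop (𝓝 (gradient G x)) := by
  choose f hlim using hptwise
  have hfconv : ConvexOn ℝ univ f := ConvexOn.of_tendsto hFconv convex_univ hlim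
  have hfdiff : ∀ᵐ x ∂μ, DifferentiableAt ℝ f x :=
    hac.ae_le hfconv.locallyLipschitz.ae_differentiableAt
  have htends : ∀ᵐ x ∂μ, Tendsto (fun n => gradient (F n) x) atTop (𝓝 (gradient f x)) :=
    hfdiff.mono fun x hx => tendsto_gradient_of_convexOn hFconv (fun n => hFdiff n x) hlim hx
  have hfpush : μ.map (gradient f) = ν := map_eq_of_ae_tendsto_of_tendsto_integral
    (fun n => (measurable_gradient (F n)).aemeasurable) (measurable_gradient f).aemeasurable
    htends hweak
  have hid : MemLp id 2 μ := (memLp_two_iff_integrable_sq_norm aestronglyMeasurable_id).mpr hμ2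
  have hG2 : MemLp (gradient G) 2 μ := memLp_of_map_eq (measurable_gradient G).aemeasurable
    hGpush ((memLp_two_iff_integrable_sq_norm aestronglyMeasurable_id).mpr hν2)
  filter_upwards [htends, gradient_ae_eq_of_map_gradient_eq hGconv hfconv hGdiff hfdiff hid hG2
    (hGpush.trans hfpush.symm)] with x hx hfG
  rwa [hfG]
end

section
/- Let μ and ν be Borel probability measures on ℝ^d with finite second moments, and let F : ℝ^d → ℝ be a convex function, differentiable μ-almost everywhere, such that (∇F)_* μ = ν. Assume that x ↦ F(x) is μ-integrable and that y ↦ F*(y) is ν-integrable, where F* denotes the Fenchel (convex) conjugate of F. Then for every coupling π of μ and ν (i.e., every probability measure on ℝ^d × ℝ^d with marginals μ and ν), one has ∫ ⟨x, y⟩ dπ(x,y) ≤ ∫ ⟨x, ∇F(x)⟩ dμ(x). In particular, ∇F maximizes the expected inner product E[⟨X, g(X)⟩] among all maps g transporting μ to ν, equivalently it minimizes the expected quadratic transport cost E[‖X − g(X)‖²]. -/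
open MeasureTheory Filter Topology Set
open scoped RealInnerProductSpace

/-!
For a convex `F`, the Fenchel–Young inequality `⟪x, y⟫ ≤ F x + F* y` holds for all `x, y`, with
equality when `y = ∇F x`. Integrating the inequality against a coupling `π` bounds
`∫ ⟪x, y⟫ dπ` by `∫ F dμ + ∫ F* dν`, which depends only on the marginals; since `ν = (∇F)_* μ`,
this bound equals `∫ (F x + F* (∇F x)) dμ = ∫ ⟪x, ∇F x⟫ dμ`.
-/

theorem integral_le_integral_add_integral_of_le_add {α β : Type*} [MeasurableSpace α]
    [MeasurableSpace β] {μ : Measure α} {ν : Measure β} {π : Measure (α × β)}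
    (hπ₁ : π.map Prod.fst = μ) (hπ₂ : π.map Prod.snd = ν) {c : α × β → ℝ} {f : α → ℝ}
    {g : β → ℝ} (hc : Integrable c π) (hf : Integrable f μ) (hg : Integrable g ν)
    (hle : ∀ᵐ p ∂π, c p ≤ f p.1 + g p.2) :
    ∫ p, c p ∂π ≤ ∫ x, f x ∂μ + ∫ y, g y ∂ν := by
  subst hπ₁ hπ₂
  have hf' : Integrable (fun p => f p.1) π := hf.comp_measurable measurable_fst
  have hg' : Integrable (fun p => g p.2) π := hg.comp_measurable measurable_snd
  calc ∫ p, c p ∂π ≤ ∫ p, (f p.1 + g p.2) ∂π := integral_mono_ae hc (hf'.add hg') hle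
    _ = _ := by
      rw [integral_add hf' hg', integral_map measurable_fst.aemeasurable hf.1,
        integral_map measurable_snd.aemeasurable hg.1]

theorem measurableSet_bddAbove_range_of_lowerSemicontinuous {ι Y : Type*} [TopologicalSpace Y]
    [MeasurableSpace Y] [OpensMeasurableSpace Y] {f : ι → Y → ℝ}
    (hf : ∀ i, LowerSemicontinuous (f i)) :
    MeasurableSet {y | BddAbove (range fun i => f i y)} := by
  have hFσ : {y | BddAbove (range fun i => f i y)} = ⋃ n : ℕ, ⋂ i, {y | f i y ≤ n} := by
    ext y
    simp only [mem_ofPred_eq, mem_iUnion, mem_iInter, bddAbove_def, forall_mem_range]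
    constructor
    · rintro ⟨C, hC⟩
      obtain ⟨n, hn⟩ := exists_nat_ge C
      exact ⟨n, fun i => (hC i).trans hn⟩
    · rintro ⟨n, hn⟩
      exact ⟨n, hn⟩
  rw [hFσ]
  exact .iUnion fun n => (isClosed_iInter fun i => (hf i).isClosed_preimage n).measurableSet

theorem ConvexOn.add_le_of_hasFDerivAt {E : Type*} [NormedAddCommGroup E] [NormedSpace ℝ E]
    {s : Set E} {F : E → ℝ} {F' : E →L[ℝ] ℝ} {x z : E} (hF : ConvexOn ℝ s F) (hx : x ∈ s)
    (hz : z ∈ s) (hF' : HasFDerivAt F F' x) : F x + F' (z - x) ≤ F z := by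
  set g : ℝ → ℝ := fun t => F (AffineMap.lineMap x z t)
  have hg : ConvexOn ℝ (Icc 0 1) g :=
    (hF.comp_affineMap (AffineMap.lineMap x z)).subset
      (fun t ht => hF.1.lineMap_mem hx hz ht) (convex_Icc 0 1)
  have hg' : HasDerivAt g (F' (z - x)) 0 := by
    have hF'0 : HasFDerivAt F F' (AffineMap.lineMap x z (0 : ℝ)) := by simpa using hF'
    exact hF'0.comp_hasDerivAt 0 AffineMap.hasDerivAt_lineMap
  have hslope := hg.le_slope_of_hasDerivAt (by simp) (by simp) one_pos hg'
  simp only [slope, g, AffineMap.lineMap_apply_zero, AffineMap.lineMap_apply_one, sub_zero,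
    inv_one, one_smul, vsub_eq_sub] at hslope
  linarith

section Conjugate

variable {E : Type*} [NormedAddCommGroup E] [InnerProductSpace ℝ E]

/-- `⨆` over an unbounded range is `0`, so `F* y` is meaningful only where
`x ↦ ⟪x, y⟫ - F x` is bounded above. -/
noncomputable def fenchelConjugate (F : E → ℝ) (y : E) : ℝ :=
  ⨆ x, ⟪x, y⟫ - F x

theorem inner_le_add_fenchelConjugate {F : E → ℝ} {y : E}
    (hy : BddAbove (range fun x => ⟪x, y⟫ - F x)) (x : E) :
    ⟪x, y⟫ ≤ F x + fenchelConjugate F y := by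
  have := le_ciSup hy x
  rw [fenchelConjugate]
  linarith

variable [CompleteSpace E] {F : E → ℝ} {x : E}

theorem ConvexOn.isGreatest_inner_gradient_sub (hF : ConvexOn ℝ univ F)
    (hx : DifferentiableAt ℝ F x) :
    IsGreatest (range fun w => ⟪w, gradient F x⟫ - F w) (⟪x, gradient F x⟫ - F x) := by
  refine ⟨mem_range_self x, forall_mem_range.2 fun w => ?_⟩
  have hsub := hF.add_le_of_hasFDerivAt (mem_univ x) (mem_univ w) hx.hasFDerivAt
  rw [← InnerProductSpace.toDual_symm_apply, ← gradient, inner_sub_right, real_inner_comm w,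
    real_inner_comm x] at hsub
  linarith

theorem ConvexOn.fenchelConjugate_gradient (hF : ConvexOn ℝ univ F)
    (hx : DifferentiableAt ℝ F x) :
    fenchelConjugate F (gradient F x) = ⟪x, gradient F x⟫ - F x :=
  (hF.isGreatest_inner_gradient_sub hx).csSup_eq

theorem measurable_gradient_s4 [MeasurableSpace E] [BorelSpace E] (F : E → ℝ) :
    Measurable (gradient F) :=
  (InnerProductSpace.toDual ℝ E).symm.continuous.measurable.comp (measurable_fderiv ℝ F)

end Conjugate

theorem integrable_inner_of_integrable_sq_norm {α E : Type*} [MeasurableSpace α] {μ : Measure α}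
    [NormedAddCommGroup E] [InnerProductSpace ℝ E] {f g : α → E}
    (hf : AEStronglyMeasurable f μ) (hg : AEStronglyMeasurable g μ)
    (hf₂ : Integrable (fun a => ‖f a‖ ^ 2) μ) (hg₂ : Integrable (fun a => ‖g a‖ ^ 2) μ) :
    Integrable (fun a => ⟪f a, g a⟫) μ := by
  refine (hf₂.add hg₂).mono (hf.inner hg) (ae_of_all _ fun a => ?_)
  calc ‖⟪f a, g a⟫‖ ≤ ‖f a‖ * ‖g a‖ := norm_inner_le_norm _ _
    _ ≤ ‖f a‖ ^ 2 + ‖g a‖ ^ 2 := by nlinarith [norm_nonneg (f a), norm_nonneg (g a)]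
    _ ≤ ‖‖f a‖ ^ 2 + ‖g a‖ ^ 2‖ := Real.le_norm_self _

theorem gradient_convex_maximizes_inner_product_over_couplings_general
    (d : ℕ) (μ ν : Measure (EuclideanSpace ℝ (Fin d)))
    (hμ2 : Integrable (fun x => ‖x‖ ^ 2) μ) (hν2 : Integrable (fun y => ‖y‖ ^ 2) ν)
    (F : EuclideanSpace ℝ (Fin d) → ℝ) (hFconv : ConvexOn ℝ univ F)
    (hFdiff : ∀ᵐ x ∂μ, DifferentiableAt ℝ F x)
    (hFpush : μ.map (fun x => gradient F x) = ν)
    (hFint : Integrable F μ)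
    (hFstarint : Integrable (fun y : EuclideanSpace ℝ (Fin d) =>
      ⨆ x : EuclideanSpace ℝ (Fin d), (⟪x, y⟫ - F x)) ν) :
    ∀ π : Measure (EuclideanSpace ℝ (Fin d) × EuclideanSpace ℝ (Fin d)),
      IsProbabilityMeasure π → π.map Prod.fst = μ → π.map Prod.snd = ν →
      ∫ p, ⟪p.1, p.2⟫ ∂π ≤ ∫ x, ⟪x, gradient F x⟫ ∂μ := by
  intro π _ hπ₁ hπ₂
  have hG := measurable_gradient_s4 F
  have hFstar : Integrable (fenchelConjugate F) ν := hFstarint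
  -- `F*` need not be measurable, but the set where it is finite is an `F_σ`.
  have hbdd : ∀ᵐ y ∂ν, BddAbove (range fun x => ⟪x, y⟫ - F x) := by
    rw [← hFpush, ae_map_iff hG.aemeasurable (measurableSet_bddAbove_range_of_lowerSemicontinuous
      (f := fun x y => ⟪x, y⟫ - F x) fun x =>
      ((continuous_const.inner continuous_id).sub continuous_const).lowerSemicontinuous)]
    filter_upwards [hFdiff] with x hx using (hFconv.isGreatest_inner_gradient_sub hx).bddAbove
  have hFY : ∀ᵐ p ∂π, ⟪p.1, p.2⟫ ≤ F p.1 + fenchelConjugate F p.2 := by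
    filter_upwards [ae_of_ae_map measurable_snd.aemeasurable (hπ₂ ▸ hbdd)] with p hp
    exact inner_le_add_fenchelConjugate hp p.1
  have hinner : Integrable (fun p => ⟪p.1, p.2⟫) π :=
    integrable_inner_of_integrable_sq_norm measurable_fst.aestronglyMeasurable
      measurable_snd.aestronglyMeasurable ((hπ₁ ▸ hμ2).comp_measurable measurable_fst)
      ((hπ₂ ▸ hν2).comp_measurable measurable_snd)
  calc ∫ p, ⟪p.1, p.2⟫ ∂π ≤ ∫ x, F x ∂μ + ∫ y, fenchelConjugate F y ∂ν :=
        integral_le_integral_add_integral_of_le_add hπ₁ hπ₂ hinner hFint hFstar hFY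
    _ = ∫ x, (F x + fenchelConjugate F (gradient F x)) ∂μ := by
        rw [integral_add hFint ((hFpush ▸ hFstar).comp_measurable hG), ← hFpush,
          integral_map hG.aemeasurable (hFpush ▸ hFstar.1)]
    _ = ∫ x, ⟪x, gradient F x⟫ ∂μ := by
        refine integral_congr_ae ?_
        filter_upwards [hFdiff] with x hx
        rw [hFconv.fenchelConjugate_gradient hx]
        ring

/-- If the gradient of a convex potential `F` transports `μ` to `ν` (both with finite second
moments), and `F` is `μ`-integrable and its Fenchel conjugate `F*` is `ν`-integrable, then
`∇F` maximizes the expected inner product among all couplings of `μ` and `ν`: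
for every coupling `π`, `∫ ⟨x,y⟩ dπ ≤ ∫ ⟨x, ∇F(x)⟩ dμ`. -/
theorem gradient_convex_maximizes_inner_product_over_couplings
    (d : ℕ) (μ ν : Measure (EuclideanSpace ℝ (Fin d)))
    [IsProbabilityMeasure μ] [IsProbabilityMeasure ν]
    (hμ2 : Integrable (fun x => ‖x‖ ^ 2) μ) (hν2 : Integrable (fun y => ‖y‖ ^ 2) ν)
    (F : EuclideanSpace ℝ (Fin d) → ℝ) (hFconv : ConvexOn ℝ univ F)
    (hFdiff : ∀ᵐ x ∂μ, DifferentiableAt ℝ F x)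
    (hFpush : μ.map (fun x => gradient F x) = ν)
    (hFint : Integrable F μ)
    (hFstarint : Integrable (fun y : EuclideanSpace ℝ (Fin d) =>
      ⨆ x : EuclideanSpace ℝ (Fin d), (⟪x, y⟫ - F x)) ν) :
    ∀ π : Measure (EuclideanSpace ℝ (Fin d) × EuclideanSpace ℝ (Fin d)),
      IsProbabilityMeasure π → π.map Prod.fst = μ → π.map Prod.snd = ν →
      ∫ p, ⟪p.1, p.2⟫ ∂π ≤ ∫ x, ⟪x, gradient F x⟫ ∂μ :=
  gradient_convex_maximizes_inner_product_over_couplings_general d μ ν hμ2 hν2 F hFconv hFdiff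
    hFpush hFint hFstarint
end

section
/- Let f : [0,1]^d → ℝ be a continuous convex function and let ε > 0. Then there exist finitely many affine functions L_1, …, L_k : ℝ^d → ℝ, each of which is a supporting hyperplane of f (i.e., L_j(x) ≤ f(x) for all x ∈ [0,1]^d, with equality at some point of [0,1]^d), such that 0 ≤ f(x) − max_{1 ≤ j ≤ k} L_j(x) ≤ (d+1)ε for all x ∈ [0,1]^d. Consequently, pointwise maxima of finitely many affine functions are dense in the space of continuous convex functions on [0,1]^d with respect to the supremum norm. -/
/-!
Separating `(y, f y)` from the interior of the epigraph gives a continuous linear `g` with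
`f y + g (x - y) ≤ f x` on `C` at every interior point `y`. If `c` is interior and
`y = x + t • (c - x)`, the error of this tangent at `x` is at most
`f x - f y + t / (1 - t) * (f c - f y)`, which tends to `0` as `t → 0⁺` since `f` is continuous
at `x` within `C`. So every `x ∈ C` has a tangent with error `< ε` at `x`, hence on a neighbourhood
of `x` in `C`, and compactness of `C` leaves finitely many tangents.
-/

open Filter Topology Set
open scoped RealInnerProductSpace

section Subgradient

variable {V : Type*} [TopologicalSpace V] {C : Set V} {f : V → ℝ} {y : V}

theorem mk_mem_interior_epigraph (hy : y ∈ interior C) (hfy : ContinuousAt f y) {t : ℝ}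
    (ht : f y < t) : (y, t) ∈ interior {p : V × ℝ | p.1 ∈ C ∧ f p.1 ≤ p.2} := by
  rw [mem_interior_iff_mem_nhds]
  have hC : ∀ᶠ p : V × ℝ in 𝓝 (y, t), p.1 ∈ C :=
    continuousAt_fst.preimage_mem_nhds (mem_interior_iff_mem_nhds.mp hy)
  have hlt : ∀ᶠ p : V × ℝ in 𝓝 (y, t), f p.1 < p.2 :=
    (hfy.comp continuousAt_fst).eventually_lt continuousAt_snd ht
  filter_upwards [hC, hlt] with p hpC hpf using ⟨hpC, hpf.le⟩

theorem mk_apply_notMem_interior_epigraph :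
    (y, f y) ∉ interior {p : V × ℝ | p.1 ∈ C ∧ f p.1 ≤ p.2} := by
  intro h
  have hfib : (y, ·) ⁻¹' {p : V × ℝ | p.1 ∈ C ∧ f p.1 ≤ p.2} ⊆ Ici (f y) := fun t ht => ht.2
  have := interior_mono hfib (preimage_interior_subset_interior_preimage (by fun_prop) h)
  rw [interior_Ici] at this
  exact lt_irrefl _ (mem_Ioi.mp this)

variable [AddCommGroup V] [Module ℝ V]

theorem tangent_gap_le_of_eq_add_smul_sub {g : V →L[ℝ] ℝ} {x c : V} {t : ℝ} (ht₀ : 0 ≤ t)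
    (ht₁ : t < 1) (hy : y = x + t • (c - x)) (hgc : f y + g (c - y) ≤ f c) :
    f x - (f y + g (x - y)) ≤ f x - f y + t / (1 - t) * (f c - f y) := by
  have hxy : g (x - y) = -t * g (c - x) := by
    rw [hy, show x - (x + t • (c - x)) = (-t) • (c - x) by module, map_smul, smul_eq_mul]
  have hcy : g (c - y) = (1 - t) * g (c - x) := by
    rw [hy, show c - (x + t • (c - x)) = (1 - t) • (c - x) by module, map_smul, smul_eq_mul]
  have : t * g (c - x) ≤ t / (1 - t) * (f c - f y) := by
    rw [div_mul_eq_mul_div, le_div_iff₀ (by linarith), mul_assoc, mul_comm (g _), ← hcy]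
    exact mul_le_mul_of_nonneg_left (by linarith) ht₀
  linarith

variable [IsTopologicalAddGroup V] [ContinuousSMul ℝ V]

theorem ConvexOn.exists_subgradient_of_mem_interior (hf : ConvexOn ℝ C f) (hy : y ∈ interior C)
    (hfy : ContinuousAt f y) : ∃ g : V →L[ℝ] ℝ, ∀ x ∈ C, f y + g (x - y) ≤ f x := by
  set E := {p : V × ℝ | p.1 ∈ C ∧ f p.1 ≤ p.2}
  have hEint : (y, f y + 1) ∈ interior E := mk_mem_interior_epigraph hy hfy (lt_add_one _)
  obtain ⟨φ, hφ⟩ := geometric_hahn_banach_open_point hf.convex_epigraph.interior isOpen_interior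
    mk_apply_notMem_interior_epigraph
  have hE : ∀ p ∈ E, φ p ≤ φ (y, f y) := by
    refine fun p hp => closure_minimal (fun q hq => (hφ q hq).le)
      (isClosed_le φ.continuous continuous_const) ?_
    rw [hf.convex_epigraph.closure_interior_eq_closure_of_nonempty_interior ⟨_, hEint⟩]
    exact subset_closure hp
  have hsplit : ∀ x t, φ (x, t) = φ (x, 0) + t * φ (0, 1) := by
    intro x t
    rw [← smul_eq_mul, ← map_smul, ← map_add]
    simp
  have hc : φ (0, 1) < 0 := by
    have := hφ _ hEint
    rw [hsplit y, hsplit y (f y)] at this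
    linarith
  refine ⟨(-φ (0, 1))⁻¹ • φ.comp (ContinuousLinearMap.inl ℝ V ℝ), fun x hx => ?_⟩
  have hxy := hE (x, f x) ⟨hx, le_rfl⟩
  rw [hsplit x, hsplit y] at hxy
  have : φ (x - y, 0) = φ (x, 0) - φ (y, 0) := by rw [← map_sub]; simp
  simp only [_root_.smul_apply, ContinuousLinearMap.comp_apply,
    ContinuousLinearMap.inl_apply, smul_eq_mul, this]
  rw [← le_sub_iff_add_le', inv_mul_le_iff₀ (by linarith)]
  linarith

theorem exists_tangent_gap_lt (hC : Convex ℝ C) {c x : V} (hc : c ∈ interior C) (hx : x ∈ C)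
    (hfx : ContinuousWithinAt f C x) {φ : V → V →L[ℝ] ℝ}
    (hφ : ∀ y ∈ interior C, ∀ z ∈ C, f y + φ y (z - y) ≤ f z) {ε : ℝ} (hε : 0 < ε) :
    ∃ y ∈ interior C, f x - (f y + φ y (x - y)) < ε := by
  set p : ℝ → V := fun t => x + t • (c - x)
  have hpC : ∀ t ∈ Ioc (0 : ℝ) 1, p t ∈ interior C := fun t ht =>
    hC.add_smul_sub_mem_interior hx hc ht
  have hp : Tendsto p (𝓝[>] 0) (𝓝[C] x) := by
    refine tendsto_nhdsWithin_iff.mpr ⟨?_, ?_⟩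
    · have : Continuous p := by fun_prop
      simpa [p] using this.continuousWithinAt (s := Ioi 0) (x := 0) |>.tendsto
    · filter_upwards [Ioc_mem_nhdsGT one_pos] with t ht using interior_subset (hpC t ht)
  have hfp : Tendsto (fun t => f (p t)) (𝓝[>] 0) (𝓝 (f x)) := hfx.tendsto.comp hp
  have hratio : Tendsto (fun t : ℝ => t / (1 - t)) (𝓝[>] 0) (𝓝 0) := by
    have : ContinuousAt (fun t : ℝ => t / (1 - t)) 0 := by fun_prop (disch := norm_num)
    simpa using this.tendsto.mono_left nhdsWithin_le_nhds
  have hbound : Tendsto (fun t => f x - f (p t) + t / (1 - t) * (f c - f (p t))) (𝓝[>] 0)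
      (𝓝 0) := by
    convert (tendsto_const_nhds.sub hfp).add (hratio.mul (tendsto_const_nhds.sub hfp)) using 2
    simp
  obtain ⟨t, hlt, ht⟩ := ((hbound.eventually_lt_const hε).and (Ioo_mem_nhdsGT one_pos)).exists
  have hpt := hpC t ⟨ht.1, ht.2.le⟩
  refine ⟨p t, hpt, lt_of_le_of_lt ?_ hlt⟩
  exact tangent_gap_le_of_eq_add_smul_sub ht.1.le ht.2 rfl
    (hφ _ hpt c (interior_subset hc))

theorem exists_finset_tangent_gap_lt (hCc : IsCompact C) (hC : Convex ℝ C) {c : V}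
    (hc : c ∈ interior C) (hf : ContinuousOn f C) {φ : V → V →L[ℝ] ℝ}
    (hφ : ∀ y ∈ interior C, ∀ z ∈ C, f y + φ y (z - y) ≤ f z) {ε : ℝ} (hε : 0 < ε) :
    ∃ s : Finset V, (∀ y ∈ s, y ∈ interior C) ∧
      ∀ x ∈ C, ∃ y ∈ s, f x - (f y + φ y (x - y)) < ε := by
  classical
  choose! y hyC hy using fun x hx => exists_tangent_gap_lt hC hc hx (hf x hx) hφ hε
  have hnhds : ∀ x ∈ C, {z | f z - (f (y x) + φ (y x) (z - y x)) < ε} ∈ 𝓝[C] x := by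
    intro x hx
    have : ContinuousWithinAt (fun z => f z - (f (y x) + φ (y x) (z - y x))) C x :=
      (hf x hx).sub (by fun_prop)
    exact this.tendsto.eventually_lt_const (hy x hx)
  obtain ⟨t, htC, hcover⟩ := hCc.elim_nhdsWithin_subcover _ hnhds
  refine ⟨t.image y, by simpa using fun x hx => hyC x (htC x hx), fun x hx => ?_⟩
  obtain ⟨x', hx't, hx⟩ := mem_iUnion₂.mp (hcover hx)
  exact ⟨y x', Finset.mem_image_of_mem y hx't, hx⟩

theorem ConvexOn.exists_sup_supporting_affine_approx (hCc : IsCompact C)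
    (hCi : (interior C).Nonempty) (hf : ConvexOn ℝ C f) (hfc : ContinuousOn f C) {ε : ℝ}
    (hε : 0 < ε) :
    ∃ (k : ℕ) (_ : 0 < k) (φ : Fin k → V →L[ℝ] ℝ) (b : Fin k → ℝ),
      (∀ j, (∀ x ∈ C, φ j x + b j ≤ f x) ∧ ∃ x ∈ C, φ j x + b j = f x) ∧
      ∀ x ∈ C, 0 ≤ f x - ⨆ j, (φ j x + b j) ∧ f x - ⨆ j, (φ j x + b j) < ε := by
  have hfy : ∀ y ∈ interior C, ContinuousAt f y := fun y hy =>
    hfc.continuousAt (mem_interior_iff_mem_nhds.mp hy)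
  choose! g hg using fun y hy => hf.exists_subgradient_of_mem_interior hy (hfy y hy)
  obtain ⟨c, hc⟩ := hCi
  obtain ⟨s, hsC, hs⟩ := exists_finset_tangent_gap_lt hCc hf.1 hc hfc hg hε
  set l := s.toList
  have hl : 0 < l.length := by
    obtain ⟨y, hy, -⟩ := hs c (interior_subset hc)
    exact List.length_pos_of_mem (Finset.mem_toList.mpr hy)
  have hlC : ∀ j, l.get j ∈ interior C := fun j => hsC _ (Finset.mem_toList.mp (List.get_mem _ _))
  set b : Fin l.length → ℝ := fun j => f (l.get j) - g (l.get j) (l.get j)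
  have hsupp : ∀ j, ∀ x ∈ C, g (l.get j) x + b j ≤ f x := by
    intro j x hx
    have := hg _ (hlC j) x hx
    rw [map_sub] at this
    linarith
  have : Nonempty (Fin l.length) := ⟨⟨0, hl⟩⟩
  refine ⟨l.length, hl, fun j => g (l.get j), b,
    fun j => ⟨hsupp j, l.get j, interior_subset (hlC j), by ring⟩, fun x hx => ⟨?_, ?_⟩⟩
  · exact sub_nonneg.mpr (ciSup_le fun j => hsupp j x hx)
  · obtain ⟨y, hys, hy⟩ := hs x hx
    obtain ⟨j, rfl⟩ := List.mem_iff_get.mp (Finset.mem_toList.mpr hys)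
    have := le_ciSup (finite_range fun j => g (l.get j) x + b j).bddAbove j
    rw [map_sub] at hy
    linarith

end Subgradient

section Box

variable {ι : Type*} {a b : ℝ}

theorem EuclideanSpace.setOf_forall_mem_eq_preimage_pi (s : Set ℝ) :
    {x : EuclideanSpace ℝ ι | ∀ i, x i ∈ s} = EuclideanSpace.equiv ι ℝ ⁻¹' univ.pi fun _ => s := by
  ext x
  simp

theorem EuclideanSpace.isCompact_setOf_forall_mem_Icc :
    IsCompact {x : EuclideanSpace ℝ ι | ∀ i, x i ∈ Icc a b} := by
  rw [setOf_forall_mem_eq_preimage_pi]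
  exact (EuclideanSpace.equiv ι ℝ).toHomeomorph.isCompact_preimage.mpr
    (isCompact_univ_pi fun _ => isCompact_Icc)

variable [Fintype ι]

theorem EuclideanSpace.interior_setOf_forall_mem_Icc_nonempty (hab : a < b) :
    (interior {x : EuclideanSpace ℝ ι | ∀ i, x i ∈ Icc a b}).Nonempty := by
  have hopen : IsOpen {x : EuclideanSpace ℝ ι | ∀ i, x i ∈ Ioo a b} := by
    rw [setOf_forall_mem_eq_preimage_pi]
    exact (isOpen_set_pi finite_univ fun _ _ => isOpen_Ioo).preimage
      (EuclideanSpace.equiv ι ℝ).continuous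
  have hsub : {x : EuclideanSpace ℝ ι | ∀ i, x i ∈ Ioo a b} ⊆ {x | ∀ i, x i ∈ Icc a b} :=
    fun x hx i => Ioo_subset_Icc_self (hx i)
  exact ⟨WithLp.toLp 2 fun _ => (a + b) / 2,
    interior_maximal hsub hopen fun _ => ⟨by linarith, by linarith⟩⟩

end Box

/-- A continuous convex function on the unit cube `[0,1]^d` can be approximated to within
`(d+1)ε` in supremum norm (from below) by the pointwise maximum of finitely many affine
supporting hyperplanes. -/
theorem convex_approx_by_max_of_affine
    (d : ℕ) (f : EuclideanSpace ℝ (Fin d) → ℝ)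
    (C : Set (EuclideanSpace ℝ (Fin d)))
    (hCdef : C = {x : EuclideanSpace ℝ (Fin d) | ∀ i, x i ∈ Icc (0 : ℝ) 1})
    (hfc : ContinuousOn f C) (hfconv : ConvexOn ℝ C f)
    (ε : ℝ) (hε : 0 < ε) :
    ∃ (k : ℕ) (_ : 0 < k) (a : Fin k → EuclideanSpace ℝ (Fin d)) (b : Fin k → ℝ),
      (∀ j : Fin k,
        (∀ x ∈ C, ⟪a j, x⟫ + b j ≤ f x) ∧ (∃ x ∈ C, ⟪a j, x⟫ + b j = f x)) ∧
      (∀ x ∈ C,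
        0 ≤ f x - (⨆ j : Fin k, (⟪a j, x⟫ + b j)) ∧
        f x - (⨆ j : Fin k, (⟪a j, x⟫ + b j)) ≤ ((d : ℝ) + 1) * ε) := by
  subst hCdef
  obtain ⟨k, hk, φ, b, hsupp, happrox⟩ := hfconv.exists_sup_supporting_affine_approx
    EuclideanSpace.isCompact_setOf_forall_mem_Icc
    (EuclideanSpace.interior_setOf_forall_mem_Icc_nonempty zero_lt_one) hfc hε
  refine ⟨k, hk, fun j => (InnerProductSpace.toDual ℝ _).symm (φ j), b, ?_⟩
  simp only [InnerProductSpace.toDual_symm_apply]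
  refine ⟨hsupp, fun x hx => ⟨(happrox x hx).1, (happrox x hx).2.le.trans ?_⟩⟩
  exact le_mul_of_one_le_left hε.le (by linarith [(d.cast_nonneg : (0 : ℝ) ≤ d)])
end

section
/- Let L_1, …, L_k : ℝ^d → ℝ be affine functions with k ≥ 2. Define z_1(x) := L_1(x) − L_2(x), z_j(x) := max(0, z_{j−1}(x)) + L_j(x) − L_{j+1}(x) for 2 ≤ j ≤ k−1, and z_k(x) := max(0, z_{k−1}(x)) + L_k(x). Then z_k(x) = max(L_1(x), …, L_k(x)) for all x ∈ ℝ^d. In particular, the pointwise maximum of finitely many affine functions is exactly representable by a ReLU network in which each layer adds a new affine function of the input to the ReLU of the previous layer's output (an input-convex network with ReLU activation). -/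
open MeasureTheory Filter Topology Set
open scoped RealInnerProductSpace

/-- The pointwise maximum of `k ≥ 2` affine functions `L₁, …, L_k` is exactly representable by a
ReLU input-convex network: with `z₁ = L₁ − L₂`, `z_j = max(0, z_{j−1}) + L_j − L_{j+1}` for
`2 ≤ j ≤ k−1` and `z_k = max(0, z_{k−1}) + L_k`, one has `z_k = max(L₁, …, L_k)`. -/
theorem relu_icnn_represents_max_of_affine
    (d k : ℕ) (hk : 2 ≤ k)
    (L : ℕ → EuclideanSpace ℝ (Fin d) → ℝ)
    (a : ℕ → EuclideanSpace ℝ (Fin d)) (b : ℕ → ℝ)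
    (hL : ∀ j, 1 ≤ j → j ≤ k → ∀ x, L j x = ⟪a j, x⟫ + b j)
    (z : ℕ → EuclideanSpace ℝ (Fin d) → ℝ)
    (hz1 : ∀ x, z 1 x = L 1 x - L 2 x)
    (hzj : ∀ j, 2 ≤ j → j ≤ k - 1 → ∀ x, z j x = max 0 (z (j - 1) x) + L j x - L (j + 1) x)
    (hzk : ∀ x, z k x = max 0 (z (k - 1) x) + L k x) :
    ∀ x, z k x = ⨆ j : Fin k, L ((j : ℕ) + 1) x := by
  intro x
  have hS : ∀ j, 1 ≤ j → (Finset.range j).Nonempty := by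
    intro j hj; exact Finset.nonempty_range_iff.mpr (by omega)
  have key : ∀ j (hj1 : 1 ≤ j), j ≤ k - 1 →
      z j x = (Finset.range j).sup' (hS j hj1) (fun i => L (i + 1) x) - L (j + 1) x := by
    intro j hj1 hj2
    induction j with
    | zero => omega
    | succ n ih =>
      rcases Nat.eq_or_lt_of_le hj1 with h1 | h1
      · simp [← h1, hz1 x]
      · have hn1 : 1 ≤ n := by omega
        have hn2 : n ≤ k - 1 := by omega
        have hrec := hzj (n + 1) (by omega) hj2 x
        simp only [Nat.add_sub_cancel] at hrec
        rw [hrec, ih hn1 hn2]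
        have hstep : (Finset.range (n + 1)).sup' (hS (n+1) hj1) (fun i => L (i + 1) x)
            = max ((Finset.range n).sup' (hS n hn1) (fun i => L (i + 1) x)) (L (n + 1) x) := by
          simp only [Finset.range_add_one]
          rw [Finset.sup'_insert (hS n hn1)]
          simp [max_comm]
        rw [hstep]
        rcases le_total ((Finset.range n).sup' (hS n hn1) (fun i => L (i + 1) x)) (L (n + 1) x) with h | h
        · rw [max_eq_left (by linarith), max_eq_right h]; ring
        · rw [max_eq_right (by linarith), max_eq_left h]; ring
  have hk1 : 1 ≤ k - 1 := by omega
  have hkey := key (k - 1) hk1 le_rfl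
  have hkk : k - 1 + 1 = k := by omega
  rw [hkk] at hkey
  rw [hzk x, hkey]
  have hstep0 : (Finset.range (k - 1 + 1)).sup' (hS (k - 1 + 1) (by omega)) (fun i => L (i + 1) x)
      = max ((Finset.range (k-1)).sup' (hS (k-1) hk1) (fun i => L (i + 1) x)) (L (k - 1 + 1) x) := by
    simp only [Finset.range_add_one]
    rw [Finset.sup'_insert (hS (k-1) hk1)]
    simp [max_comm]
  simp only [hkk] at hstep0
  have hstep : (Finset.range k).sup' (hS k (by omega)) (fun i => L (i + 1) x)
      = max ((Finset.range (k-1)).sup' (hS (k-1) hk1) (fun i => L (i + 1) x)) (L k x) := hstep0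
  have hsup : max 0 ((Finset.range (k-1)).sup' (hS (k-1) hk1) (fun i => L (i + 1) x) - L k x) + L k x
      = (Finset.range k).sup' (hS k (by omega)) (fun i => L (i + 1) x) := by
    rw [hstep]
    rcases le_total ((Finset.range (k-1)).sup' (hS (k-1) hk1) (fun i => L (i + 1) x)) (L k x) with h | h
    · rw [max_eq_left (by linarith), max_eq_right h]; ring
    · rw [max_eq_right (by linarith), max_eq_left h]; ring
  rw [hsup]
  have hne : Nonempty (Fin k) := ⟨⟨0, by omega⟩⟩
  apply le_antisymm
  · apply Finset.sup'_le
    intro i hi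
    have hik : i < k := Finset.mem_range.mp hi
    exact le_ciSup (f := fun j : Fin k => L ((j : ℕ) + 1) x)
      (Set.Finite.bddAbove (Set.finite_range _)) (⟨i, hik⟩ : Fin k)
  · apply ciSup_le
    intro j
    exact Finset.le_sup' (fun i => L (i + 1) x) (Finset.mem_range.mpr j.2)
end

section
/- Let p : ℝ → [0,∞) be a Lebesgue probability density with finite first moment and mean zero (∫ |y| p(y) dy < ∞ and ∫ y p(y) dy = 0), let F_p(x) = ∫_{−∞}^x p(y) dy be its cumulative distribution function, and let s := p * r be the convolution of p with the ReLU function r(t) = max(0, t). Then for every x ∈ ℝ, s(x) = ∫_{−∞}^x F_p(y) dy. -/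
open MeasureTheory Set

/-! Fubini on the triangle `{(t, y) | t ≤ y ≤ x}` for the function `(t, y) ↦ p t`: integrating
out `y` first gives `(x - t)⁺ p t`, integrating out `t` first gives the CDF of `p` at `y ≤ x`.
The first moment makes this function integrable on the plane. -/

variable {E : Type*} [NormedAddCommGroup E]

theorem integrable_max_sub_smul [NormedSpace ℝ E] {p : ℝ → E} (hp : Integrable p)
    (hmom : Integrable fun t => t • p t) (x : ℝ) :
    Integrable fun t => max (x - t) 0 • p t := by
  refine ((hp.smul x).sub hmom).mono ?_ (ae_of_all _ fun t => ?_)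
  · exact ((continuous_const.sub continuous_id).max continuous_const).aestronglyMeasurable.smul
      hp.aestronglyMeasurable
  · rw [Pi.sub_apply, Pi.smul_apply, ← sub_smul, norm_smul, norm_smul]
    gcongr
    rw [Real.norm_of_nonneg (le_max_right _ _)]
    exact max_le (le_abs_self _) (abs_nonneg _)

noncomputable def rampKernel (p : ℝ → E) (x : ℝ) : ℝ × ℝ → E :=
  {q | q.1 ≤ q.2 ∧ q.2 ≤ x}.indicator fun q => p q.1

namespace rampKernel

variable {p : ℝ → E} {x : ℝ}

theorem apply_eq_indicator_Icc (t y : ℝ) :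
    rampKernel p x (t, y) = (Icc t x).indicator (fun _ => p t) y := by
  simp only [rampKernel, indicator_apply, mem_ofPred_eq, mem_Icc]

theorem integral_fst [NormedSpace ℝ E] [CompleteSpace E] (t : ℝ) :
    ∫ y, rampKernel p x (t, y) = max (x - t) 0 • p t := by
  simp only [apply_eq_indicator_Icc, integral_indicator_const _ measurableSet_Icc,
    Real.volume_real_Icc]

theorem integral_snd [NormedSpace ℝ E] (y : ℝ) :
    ∫ t, rampKernel p x (t, y) = (Iic x).indicator (fun y => ∫ t in Iic y, p t) y := by
  by_cases hyx : y ≤ x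
  · rw [indicator_of_mem (mem_Iic.2 hyx), ← integral_indicator measurableSet_Iic]
    congr 1 with t
    simp only [rampKernel, indicator_apply, mem_ofPred_eq, mem_Iic, hyx, and_true]
  · rw [indicator_of_notMem (mt mem_Iic.1 hyx)]
    simp [rampKernel, hyx]

theorem integrable [NormedSpace ℝ E] (hp : Integrable p) (hmom : Integrable fun t => t • p t) :
    Integrable (rampKernel p x) (volume.prod volume) := by
  have hS : MeasurableSet {q : ℝ × ℝ | q.1 ≤ q.2 ∧ q.2 ≤ x} :=
    (measurableSet_le measurable_fst measurable_snd).inter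
      (measurableSet_le measurable_snd measurable_const)
  refine (integrable_prod_iff (f := rampKernel p x)
    (hp.aestronglyMeasurable.comp_fst.indicator hS)).2
    ⟨ae_of_all _ fun t => ?_, ?_⟩
  · simp only [apply_eq_indicator_Icc]
    exact (integrable_indicator_iff measurableSet_Icc).2
      (integrableOn_const measure_Icc_lt_top.ne)
  · convert (integrable_max_sub_smul hp hmom x).norm using 2 with t
    simp only [apply_eq_indicator_Icc, norm_indicator_eq_indicator_norm,
      integral_indicator_const _ measurableSet_Icc, Real.volume_real_Icc, norm_smul, smul_eq_mul,
      Real.norm_of_nonneg (le_max_right (x - t) 0)]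

end rampKernel

theorem integral_max_sub_smul_eq_setIntegral_Iic_setIntegral_Iic [NormedSpace ℝ E]
    [CompleteSpace E] {p : ℝ → E} (hp : Integrable p)
    (hmom : Integrable fun t => t • p t) (x : ℝ) :
    ∫ y, max (x - y) 0 • p y = ∫ y in Iic x, ∫ t in Iic y, p t := by
  rw [← integral_indicator measurableSet_Iic]
  simp only [← rampKernel.integral_fst, ← rampKernel.integral_snd]
  exact integral_integral_swap (rampKernel.integrable hp hmom)

theorem softplus_eq_integral_of_cdf_general
    (p : ℝ → ℝ)
    (hint : Integrable p)
    (hmom : Integrable (fun y => |y| * p y)) :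
    ∀ x : ℝ,
      ∫ y, max (x - y) 0 * p y = ∫ y in Iic x, (∫ t in Iic y, p t) := by
  have hmom' : Integrable fun y => y • p y :=
    hmom.mono (continuous_id.aestronglyMeasurable.smul hint.aestronglyMeasurable)
      (ae_of_all _ fun y => by simp)
  exact integral_max_sub_smul_eq_setIntegral_Iic_setIntegral_Iic hint hmom'

/-- For a mean-zero probability density `p` on `ℝ` with finite first moment and CDF `F_p`,
the convolution `s := p * r` of `p` with ReLU satisfies `s(x) = ∫_{−∞}^x F_p(y) dy`. -/
theorem softplus_eq_integral_of_cdf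
    (p : ℝ → ℝ) (hp0 : ∀ y, 0 ≤ p y)
    (hint : Integrable p) (hprob : ∫ y, p y = 1)
    (hmom : Integrable (fun y => |y| * p y))
    (hmean : ∫ y, y * p y = 0) :
    ∀ x : ℝ,
      ∫ y, max (x - y) 0 * p y = ∫ y in Iic x, (∫ t in Iic y, p t) :=
  softplus_eq_integral_of_cdf_general p hint hmom
end

section
/- Let p : ℝ → [0,∞) be a Lebesgue probability density with finite first moment and mean zero (∫ |y| p(y) dy < ∞ and ∫ y p(y) dy = 0), and let s := p * r be the convolution of p with the ReLU function r(t) = max(0, t). Then |s(x) − max(0, x)| → 0 as x → +∞ and as x → −∞. -/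
open MeasureTheory Filter Topology Set

lemma max_sub_self (a : ℝ) : max a 0 - a = max (-a) 0 := by
  rcases le_total a 0 with h | h
  · rw [max_eq_right h, max_eq_left (neg_nonneg.mpr h)]; ring
  · rw [max_eq_left h, max_eq_right (neg_nonpos.mpr h)]; ring

/-- For a mean-zero probability density `p` on `ℝ` with finite first moment, the convolution
`s := p * r` of `p` with ReLU satisfies `|s(x) − max(0, x)| → 0` as `x → +∞` and as `x → −∞`. -/
theorem softplus_asymptotic_relu
    (p : ℝ → ℝ) (hp0 : ∀ y, 0 ≤ p y)
    (hint : Integrable p) (hprob : ∫ y, p y = 1)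
    (hmom : Integrable (fun y => |y| * p y))
    (hmean : ∫ y, y * p y = 0) :
    Tendsto (fun x => |(∫ y, max (x - y) 0 * p y) - max 0 x|) atTop (𝓝 0) ∧
    Tendsto (fun x => |(∫ y, max (x - y) 0 * p y) - max 0 x|) atBot (𝓝 0) := by
  -- measurability of the integrands
  have hmeas : ∀ x : ℝ, AEStronglyMeasurable (fun y => max (x - y) 0 * p y) volume := by
    intro x
    exact (Continuous.aestronglyMeasurable (by continuity)).mul hint.1
  have hmeas' : ∀ x : ℝ, AEStronglyMeasurable (fun y => max (y - x) 0 * p y) volume := by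
    intro x
    exact (Continuous.aestronglyMeasurable (by continuity)).mul hint.1
  -- y * p y is integrable
  have hyp : Integrable (fun y : ℝ => y * p y) := by
    refine hmom.mono' ((Continuous.aestronglyMeasurable continuous_id).mul hint.1) ?_
    filter_upwards with y
    rw [Real.norm_eq_abs, abs_mul, abs_of_nonneg (hp0 y)]
  -- integrability of the main integrand
  have hInt : ∀ x : ℝ, Integrable (fun y => max (x - y) 0 * p y) := by
    intro x
    refine Integrable.mono' ((hint.const_mul |x|).add hmom) (hmeas x) ?_
    filter_upwards with y
    rw [Real.norm_eq_abs, abs_mul, abs_of_nonneg (hp0 y)]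
    have h1 : |max (x - y) 0| ≤ |x| + |y| := by
      rw [abs_of_nonneg (le_max_right _ _)]
      refine max_le ?_ (by positivity)
      calc x - y ≤ |x - y| := le_abs_self _
        _ ≤ |x| + |y| := abs_sub _ _
    calc |max (x - y) 0| * p y ≤ (|x| + |y|) * p y :=
          mul_le_mul_of_nonneg_right h1 (hp0 y)
      _ = |x| * p y + |y| * p y := by ring
  have hInt' : ∀ x : ℝ, Integrable (fun y => max (y - x) 0 * p y) := by
    intro x
    refine Integrable.mono' ((hint.const_mul |x|).add hmom) (hmeas' x) ?_
    filter_upwards with y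
    rw [Real.norm_eq_abs, abs_mul, abs_of_nonneg (hp0 y)]
    have h1 : |max (y - x) 0| ≤ |x| + |y| := by
      rw [abs_of_nonneg (le_max_right _ _)]
      refine max_le ?_ (by positivity)
      calc y - x ≤ |y - x| := le_abs_self _
        _ ≤ |y| + |x| := abs_sub _ _
        _ = |x| + |y| := by ring
    calc |max (y - x) 0| * p y ≤ (|x| + |y|) * p y :=
          mul_le_mul_of_nonneg_right h1 (hp0 y)
      _ = |x| * p y + |y| * p y := by ring
  -- ∫ (x - y) p y = x
  have hxint : ∀ x : ℝ, Integrable (fun y => (x - y) * p y) := by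
    intro x
    have : (fun y => (x - y) * p y) = fun y => x * p y - y * p y := by
      funext y; ring
    rw [this]
    exact (hint.const_mul x).sub hyp
  have hlin : ∀ x : ℝ, ∫ y, (x - y) * p y = x := by
    intro x
    have : (fun y => (x - y) * p y) = fun y => x * p y - y * p y := by
      funext y; ring
    rw [this, integral_sub (hint.const_mul x) hyp, MeasureTheory.integral_const_mul, hprob, hmean]
    ring
  constructor
  · -- atTop case
    have key : Tendsto (fun x => ∫ y, max (y - x) 0 * p y) atTop (𝓝 0) := by
      have key0 : Tendsto (fun x => ∫ y, max (y - x) 0 * p y) atTop (𝓝 (∫ _y : ℝ, (0:ℝ))) := by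
        refine tendsto_integral_filter_of_dominated_convergence (fun y => |y| * p y)
          (Eventually.of_forall hmeas') ?_ hmom ?_
        · filter_upwards [eventually_ge_atTop (0 : ℝ)] with x hx
          filter_upwards with y
          rw [Real.norm_eq_abs, abs_mul, abs_of_nonneg (hp0 y),
            abs_of_nonneg (le_max_right _ _)]
          refine mul_le_mul_of_nonneg_right ?_ (hp0 y)
          refine max_le ?_ (abs_nonneg _)
          calc y - x ≤ y - 0 := by linarith
            _ = y := by ring
            _ ≤ |y| := le_abs_self _
        · filter_upwards with y
          refine Tendsto.congr' ?_ tendsto_const_nhds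
          filter_upwards [eventually_ge_atTop y] with x hx
          rw [max_eq_right (by linarith), zero_mul]
      simpa using key0
    have keyabs := key.abs
    rw [abs_zero] at keyabs
    refine keyabs.congr' ?_
    filter_upwards [eventually_ge_atTop (0 : ℝ)] with x hx
    have e1 : (∫ y, max (y - x) 0 * p y) = (∫ y, max (x - y) 0 * p y) - max 0 x := by
      rw [max_eq_right hx]
      have : (fun y => max (y - x) 0 * p y)
          = fun y => max (x - y) 0 * p y - (x - y) * p y := by
        funext y
        rw [← sub_mul, max_sub_self, neg_sub]
      rw [this, integral_sub (hInt x) (hxint x), hlin]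
    rw [← e1]
  · -- atBot case
    have key : Tendsto (fun x => ∫ y, max (x - y) 0 * p y) atBot (𝓝 0) := by
      have key0 : Tendsto (fun x => ∫ y, max (x - y) 0 * p y) atBot (𝓝 (∫ _y : ℝ, (0:ℝ))) := by
        refine tendsto_integral_filter_of_dominated_convergence (fun y => |y| * p y)
          (Eventually.of_forall hmeas) ?_ hmom ?_
        · filter_upwards [eventually_le_atBot (0 : ℝ)] with x hx
          filter_upwards with y
          rw [Real.norm_eq_abs, abs_mul, abs_of_nonneg (hp0 y),
            abs_of_nonneg (le_max_right _ _)]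
          refine mul_le_mul_of_nonneg_right ?_ (hp0 y)
          refine max_le ?_ (abs_nonneg _)
          calc x - y ≤ 0 - y := by linarith
            _ = -y := by ring
            _ ≤ |y| := neg_le_abs _
        · filter_upwards with y
          refine Tendsto.congr' ?_ tendsto_const_nhds
          filter_upwards [eventually_le_atBot y] with x hx
          rw [max_eq_right (by linarith), zero_mul]
      simpa using key0
    have keyabs := key.abs
    rw [abs_zero] at keyabs
    refine keyabs.congr' ?_
    filter_upwards [eventually_le_atBot (0 : ℝ)] with x hx
    rw [max_eq_left hx, sub_zero]
end

section
/- Let s : ℝ → ℝ be a softplus-type function, i.e., s(x) ≥ max(0, x) for all x, s is convex, and |s(x) − max(0, x)| → 0 as |x| → ∞. Then the rescaled functions uniformly approximate the ReLU function: sup_{x ∈ ℝ} |s(a x)/a − max(0, x)| → 0 as a → +∞. -/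
/-!
A convex function on `ℝ` is continuous, so `s - relu` is continuous and tends to `0` at `±∞`;
hence it is bounded, say by `M`. Since `relu` is positively homogeneous,
`s (a x) / a - relu x = (s (a x) - relu (a x)) / a`, which is at most `M / a` in absolute value,
uniformly in `x`.
-/

open Filter Topology Set

theorem max_zero_mul_of_nonneg {a : ℝ} (ha : 0 ≤ a) (x : ℝ) : max 0 (a * x) = a * max 0 x := by
  rw [mul_max_of_nonneg _ _ ha, mul_zero]

theorem Continuous.isBounded_range_of_tendsto_atTop_atBot {β E : Type*} [TopologicalSpace β]
    [LinearOrder β] [OrderClosedTopology β] [CompactIccSpace β] [NoMaxOrder β] [NoMinOrder β]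
    [SeminormedAddCommGroup E] {f : β → E} (hf : Continuous f) {b c : E}
    (htop : Tendsto f atTop (𝓝 b)) (hbot : Tendsto f atBot (𝓝 c)) : Bornology.IsBounded (range f) :=
  hf.isBounded_range_iff_isBigO_atTop_atBot.mpr ⟨htop.isBigO_one ℝ, hbot.isBigO_one ℝ⟩

theorem abs_div_sub_max_zero_le {s : ℝ → ℝ} {M : ℝ} (hM : ∀ y, |s y - max 0 y| ≤ M) {a : ℝ}
    (ha : 0 < a) (x : ℝ) : |s (a * x) / a - max 0 x| ≤ M / a := by
  have hrescale : s (a * x) / a - max 0 x = (s (a * x) - max 0 (a * x)) / a := by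
    rw [max_zero_mul_of_nonneg ha.le, sub_div, mul_div_cancel_left₀ _ ha.ne']
  rw [hrescale, abs_div, abs_of_pos ha]
  exact div_le_div_of_nonneg_right (hM _) ha.le

theorem softplus_type_rescaled_uniformly_approximates_relu_general
    (s : ℝ → ℝ)
    (hconv : ConvexOn ℝ univ s)
    (htop : Tendsto (fun x => |s x - max 0 x|) atTop (𝓝 0))
    (hbot : Tendsto (fun x => |s x - max 0 x|) atBot (𝓝 0)) :
    ∀ ε > 0, ∃ A : ℝ, ∀ a ≥ A, ∀ x : ℝ, |s (a * x) / a - max 0 x| ≤ ε := by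
  intro ε hε
  have hcont : Continuous fun x => s x - max 0 x :=
    (continuousOn_univ.mp (hconv.continuousOn isOpen_univ)).sub
      (continuous_const.max continuous_id)
  obtain ⟨M, hM_range⟩ := isBounded_iff_forall_norm_le.mp <|
    hcont.isBounded_range_of_tendsto_atTop_atBot
      ((tendsto_zero_iff_abs_tendsto_zero _).mpr htop)
      ((tendsto_zero_iff_abs_tendsto_zero _).mpr hbot)
  have hM : ∀ y, |s y - max 0 y| ≤ M := fun y => hM_range _ (mem_range_self y)
  have hlarge : ∀ᶠ a in atTop, 0 < a ∧ M / a ≤ ε :=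
    (eventually_gt_atTop 0).and <|
      (tendsto_const_nhds.div_atTop tendsto_id).eventually (eventually_le_nhds hε)
  obtain ⟨A, hA⟩ := eventually_atTop.mp hlarge
  exact ⟨A, fun a ha x => (abs_div_sub_max_zero_le hM (hA a ha).1 x).trans (hA a ha).2⟩

/-- A softplus-type function `s` (`s ≥ ReLU`, `s` convex, `|s − ReLU| → 0` at `±∞`) uniformly
approximates ReLU after rescaling: `sup_x |s(ax)/a − max(0, x)| → 0` as `a → +∞`. -/
theorem softplus_type_rescaled_uniformly_approximates_relu
    (s : ℝ → ℝ)
    (hge : ∀ x, max 0 x ≤ s x)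
    (hconv : ConvexOn ℝ univ s)
    (htop : Tendsto (fun x => |s x - max 0 x|) atTop (𝓝 0))
    (hbot : Tendsto (fun x => |s x - max 0 x|) atBot (𝓝 0)) :
    ∀ ε > 0, ∃ A : ℝ, ∀ a ≥ A, ∀ x : ℝ, |s (a * x) / a - max 0 x| ≤ ε :=
  softplus_type_rescaled_uniformly_approximates_relu_general s hconv htop hbot
end
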